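/- arXiv:1701.05738 — 3 statements merged into one kernel-verified Lean document; each statement's English description precedes it below -/
import Mathlib

section
/- In a move-to-front record, infinitely-visited indices eventually precede finitely-visited ones: with the setup as before, if index i appears in infinitely many M_t and index j appears in only finitely many M_t, then eventually (for all sufficiently large t) the position of i in π_t is strictly smaller than the position of j in π_t. -/
/-- Move-to-front update: the indices in `M` are moved to the front positions
(preserving their relative order in `π`), all other indices are shifted right
preserving their relative order. -/
noncomputable def moveToFront {k : ℕ} (π : Equiv.Perm (Fin k)) (M : Finset (Fin k)) :
    Equiv.Perm (Fin k) :=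
  let L : List (Fin k) :=
    ((List.finRange k).map π).filter (fun x => decide (x ∈ M)) ++
      ((List.finRange k).map π).filter (fun x => !decide (x ∈ M))
  have hperm : List.Perm L ((List.finRange k).map π) :=
    List.filter_append_perm _ _
  have hnodup : L.Nodup :=
    hperm.nodup_iff.mpr ((List.nodup_finRange k).map π.injective)
  have hlen : L.length = k := by
    simpa using hperm.length_eq
  Equiv.ofBijective (fun j => L.get (Fin.cast hlen.symm j))
    (Finite.injective_iff_bijective.mp
      (fun a b hab => by
        have := (List.nodup_iff_injective_get.mp hnodup) hab
        exact Fin.cast_injective _ this))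

/-- The move-to-front record: `π (t+1)` is obtained from `π t` by moving the
indices in `M t` to the front. -/
noncomputable def mtfSeq {k : ℕ} (π0 : Equiv.Perm (Fin k)) (M : ℕ → Finset (Fin k)) :
    ℕ → Equiv.Perm (Fin k) :=
  fun t => Nat.rec π0 (fun s p => moveToFront p (M s)) t

/-!
After the last time `j` is visited it is never moved to the front again, and a move-to-front step
that leaves `j` behind keeps the indices outside the moved set in their relative order, while
anything it moves lands ahead of `j`. So once `i` is visited after that time, it stays ahead of `j`
forever. Relative order is handled through pair sublists: `σ⁻¹ a < σ⁻¹ b` says exactly that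
`[a, b]` is a sublist of the list `σ 0, …, σ (k - 1)`, which reduces each step to `List.filter`.
-/

open List

theorem List.pair_sublist_finRange {k : ℕ} {x y : Fin k} (h : x < y) : [x, y] <+ finRange k :=
  sublist_of_subperm_of_pairwise (r := (· ≤ ·))
    (subperm_of_subset (by simpa using h.ne) (by simp)) (by simpa using h.le)
    (pairwise_le_finRange k)

theorem List.pair_sublist_filter_append_filter {α : Type*} {l : List α} {p : α → Bool}
    {a b : α} (hb : p b = false) (h : (p a ∧ a ∈ l ∧ b ∈ l) ∨ [a, b] <+ l) :
    [a, b] <+ l.filter p ++ l.filter (fun x => !p x) := by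
  by_cases ha : p a
  · obtain ⟨ha_mem, hb_mem⟩ : a ∈ l ∧ b ∈ l :=
      h.elim (·.2) fun h => ⟨h.subset (by simp), h.subset (by simp)⟩
    exact (singleton_sublist.2 (mem_filter.2 ⟨ha_mem, ha⟩)).append
      (singleton_sublist.2 (mem_filter.2 ⟨hb_mem, by simp [hb]⟩))
  · refine sublist_append_of_sublist_right ?_
    simpa [ha, hb] using (h.resolve_left fun h => ha h.1).filter (fun x => !p x)

theorem Equiv.Perm.inv_lt_inv_iff_pair_sublist {k : ℕ} (σ : Equiv.Perm (Fin k)) (a b : Fin k) :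
    σ⁻¹ a < σ⁻¹ b ↔ [a, b] <+ (finRange k).map σ := by
  constructor
  · intro h
    simpa using (pair_sublist_finRange h).map σ
  · intro h
    have h' : [σ⁻¹ a, σ⁻¹ b] <+ finRange k := by simpa [map_map] using h.map ⇑σ⁻¹
    exact (pairwise_lt_finRange k).forall_sublist h'

theorem map_finRange_moveToFront {k : ℕ} (π : Equiv.Perm (Fin k)) (M : Finset (Fin k)) :
    (finRange k).map (moveToFront π M) =
      ((finRange k).map π).filter (fun x => decide (x ∈ M)) ++
        ((finRange k).map π).filter (fun x => !decide (x ∈ M)) := by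
  apply ext_get (by simp [(filter_append_perm _ _).length_eq])
  intro n _ _
  simp [moveToFront]

theorem moveToFront_inv_lt_inv {k : ℕ} {π : Equiv.Perm (Fin k)} {M : Finset (Fin k)}
    {i j : Fin k} (hj : j ∉ M) (h : i ∈ M ∨ π⁻¹ i < π⁻¹ j) :
    (moveToFront π M)⁻¹ i < (moveToFront π M)⁻¹ j := by
  rw [Equiv.Perm.inv_lt_inv_iff_pair_sublist, map_finRange_moveToFront]
  rw [Equiv.Perm.inv_lt_inv_iff_pair_sublist] at h
  exact pair_sublist_filter_append_filter (by simpa using hj)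
    (h.imp_left fun hi =>
      ⟨by simpa using hi, by simpa using π.surjective i, by simpa using π.surjective j⟩)

theorem mtfSeq_succ {k : ℕ} (π0 : Equiv.Perm (Fin k)) (M : ℕ → Finset (Fin k)) (t : ℕ) :
    mtfSeq π0 M (t + 1) = moveToFront (mtfSeq π0 M t) (M t) := rfl

theorem infinitely_visited_precedes_finitely_visited_general {k : ℕ}
    (π0 : Equiv.Perm (Fin k)) (M : ℕ → Finset (Fin k)) (i j : Fin k)
    (hi : Set.Infinite {t : ℕ | i ∈ M t})
    (hj : Set.Finite {t : ℕ | j ∈ M t}) :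
    ∃ T : ℕ, ∀ t ≥ T, ((mtfSeq π0 M t)⁻¹ i : Fin k) < (mtfSeq π0 M t)⁻¹ j := by
  obtain ⟨N, hN⟩ := hj.bddAbove
  have hj_notMem : ∀ t, N < t → j ∉ M t := fun t ht hjt => (hN hjt).not_gt ht
  obtain ⟨t₀, hit₀, ht₀⟩ := hi.exists_gt N
  refine ⟨t₀ + 1, fun t ht => ?_⟩
  induction t, ht using Nat.le_induction with
  | base =>
    rw [mtfSeq_succ]
    exact moveToFront_inv_lt_inv (hj_notMem t₀ ht₀) (Or.inl hit₀)
  | succ t ht ih =>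
    rw [mtfSeq_succ]
    exact moveToFront_inv_lt_inv (hj_notMem t (by omega)) (Or.inr ih)

/-- In a move-to-front record, infinitely-visited indices eventually precede
finitely-visited ones. -/
theorem infinitely_visited_precedes_finitely_visited {k : ℕ}
    (π0 : Equiv.Perm (Fin k)) (M : ℕ → Finset (Fin k)) (i j : Fin k)
    (hij : i ≠ j)
    (hi : Set.Infinite {t : ℕ | i ∈ M t})
    (hj : Set.Finite {t : ℕ | j ∈ M t}) :
    ∃ T : ℕ, ∀ t ≥ T, ((mtfSeq π0 M t)⁻¹ i : Fin k) < (mtfSeq π0 M t)⁻¹ j :=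
  infinitely_visited_precedes_finitely_visited_general π0 M i j hi hj
end

section
/- If every prohibited set F_i with smaller position (in the stabilized permutation) than that of some infinitely-visited prohibited set is itself visited infinitely often, and a transition visiting I_n infinitely often has F_n visited only finitely often, then the position of pair n eventually exceeds the position of every infinitely often visited prohibited set. Formally: in the move-to-front record, if the index n is moved only finitely often while indices in a set A ⊆ Fin k are each moved infinitely often, then eventually π_t⁻¹(a) < π_t⁻¹(n) for all a ∈ A simultaneously. -/
open Filter

theorem List.idxOf_filter_lt_idxOf_filter {α : Type*} [DecidableEq α] {p : α → Bool} {a b : α}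
    (hpa : p a) {l : List α} (h : l.idxOf a < l.idxOf b) :
    (l.filter p).idxOf a < (l.filter p).idxOf b := by
  induction l with
  | nil => simp at h
  | cons c l ih =>
    have hcb : c ≠ b := by rintro rfl; simp at h
    grind [List.idxOf_cons_ne]

section MoveToFront

variable {k : ℕ} (π : Equiv.Perm (Fin k)) (M : Finset (Fin k))

/-- The list `L` of `moveToFront`: `moveToFront π M j` is its `j`-th entry. -/
def moveToFrontList : List (Fin k) :=
  ((List.finRange k).map π).filter (fun x => decide (x ∈ M)) ++
    ((List.finRange k).map π).filter (fun x => !decide (x ∈ M))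

theorem Equiv.Perm.idxOf_map_finRange (x : Fin k) :
    ((List.finRange k).map π).idxOf x = π⁻¹ x := by
  have hnodup := (List.nodup_finRange k).map π.injective
  simpa using hnodup.idxOf_getElem (π⁻¹ x) (by simp)

theorem moveToFront_inv_apply_coe (x : Fin k) :
    ((moveToFront π M)⁻¹ x : ℕ) = (moveToFrontList π M).idxOf x := by
  have hperm : (moveToFrontList π M).Perm ((List.finRange k).map π) := List.filter_append_perm _ _
  have hnodup := hperm.nodup_iff.2 ((List.nodup_finRange k).map π.injective)
  have hlen : (moveToFrontList π M).length = k := by simpa using hperm.length_eq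
  obtain ⟨j, rfl⟩ := (moveToFront π M).surjective x
  rw [Equiv.Perm.inv_def, Equiv.symm_apply_apply]
  exact (hnodup.idxOf_getElem j (hlen.symm ▸ j.isLt)).symm

variable {π M}

theorem moveToFront_inv_lt_of_notMem {a x : Fin k} (hx : x ∉ M)
    (h : a ∈ M ∨ π⁻¹ a < π⁻¹ x) :
    (moveToFront π M)⁻¹ a < (moveToFront π M)⁻¹ x := by
  rw [Fin.lt_def, moveToFront_inv_apply_coe, moveToFront_inv_apply_coe, moveToFrontList]
  set L := (List.finRange k).map π
  have hxL : x ∉ L.filter (fun y => decide (y ∈ M)) := by simp [hx]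
  rw [List.idxOf_append_of_notMem hxL]
  by_cases haM : a ∈ M
  · have haL : a ∈ L.filter (fun y => decide (y ∈ M)) := by
      simpa [L, haM] using π.surjective a
    rw [List.idxOf_append_of_mem haL]
    exact (List.idxOf_lt_length_of_mem haL).trans_le (Nat.le_add_right _ _)
  · have haL : a ∉ L.filter (fun y => decide (y ∈ M)) := by simp [haM]
    rw [List.idxOf_append_of_notMem haL, Nat.add_lt_add_iff_left]
    refine List.idxOf_filter_lt_idxOf_filter (by simpa using haM) ?_
    rw [π.idxOf_map_finRange, π.idxOf_map_finRange]
    exact h.resolve_left haM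

end MoveToFront

theorem mtfSeq_inv_lt_of_mem {k : ℕ} {π0 : Equiv.Perm (Fin k)} {M : ℕ → Finset (Fin k)}
    {a n : Fin k} {s : ℕ} (ha : a ∈ M s) (hn : ∀ t ≥ s, n ∉ M t) {t : ℕ} (hst : s < t) :
    (mtfSeq π0 M t)⁻¹ a < (mtfSeq π0 M t)⁻¹ n := by
  induction t, hst using Nat.le_induction with
  | base => exact moveToFront_inv_lt_of_notMem (hn s le_rfl) (.inl ha)
  | succ t hst ih => exact moveToFront_inv_lt_of_notMem (hn t (Nat.le_of_succ_le hst)) (.inr ih)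

theorem mtfSeq_eventually_inv_lt {k : ℕ} {π0 : Equiv.Perm (Fin k)} {M : ℕ → Finset (Fin k)}
    {a n : Fin k} (hn : ∀ᶠ t in atTop, n ∉ M t) (ha : ∃ᶠ t in atTop, a ∈ M t) :
    ∀ᶠ t in atTop, (mtfSeq π0 M t)⁻¹ a < (mtfSeq π0 M t)⁻¹ n := by
  obtain ⟨T, hT⟩ := eventually_atTop.1 hn
  obtain ⟨s, hsT, hs⟩ := frequently_atTop.1 ha T
  exact eventually_atTop.2
    ⟨s + 1, fun t ht => mtfSeq_inv_lt_of_mem hs (fun u hu => hT u (hsT.trans hu)) ht⟩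

theorem eventually_all_infinitely_moved_precede_general {k : ℕ}
    (π0 : Equiv.Perm (Fin k)) (M : ℕ → Finset (Fin k))
    (A : Finset (Fin k)) (n : Fin k)
    (hn : Set.Finite {t : ℕ | n ∈ M t})
    (hA : ∀ a ∈ A, Set.Infinite {t : ℕ | a ∈ M t}) :
    ∃ T : ℕ, ∀ t ≥ T, ∀ a ∈ A,
      ((mtfSeq π0 M t)⁻¹ a : Fin k) < (mtfSeq π0 M t)⁻¹ n := by
  have hn' : ∀ᶠ t in atTop, n ∉ M t := Nat.cofinite_eq_atTop ▸ hn.eventually_cofinite_notMem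
  have hA' : ∀ a ∈ A, ∀ᶠ t in atTop, (mtfSeq π0 M t)⁻¹ a < (mtfSeq π0 M t)⁻¹ n :=
    fun a ha => mtfSeq_eventually_inv_lt hn' (Nat.frequently_atTop_iff_infinite.2 (hA a ha))
  exact eventually_atTop.1 ((eventually_all_finset A).2 hA')

/-- If the index `n` is moved to the front only finitely often while each
index in `A` is moved infinitely often, then eventually every `a ∈ A`
simultaneously has a strictly smaller position than `n`. -/
theorem eventually_all_infinitely_moved_precede {k : ℕ}
    (π0 : Equiv.Perm (Fin k)) (M : ℕ → Finset (Fin k))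
    (A : Finset (Fin k)) (n : Fin k) (hnA : n ∉ A)
    (hn : Set.Finite {t : ℕ | n ∈ M t})
    (hA : ∀ a ∈ A, Set.Infinite {t : ℕ | a ∈ M t}) :
    ∃ T : ℕ, ∀ t ≥ T, ∀ a ∈ A,
      ((mtfSeq π0 M t)⁻¹ a : Fin k) < (mtfSeq π0 M t)⁻¹ n :=
  eventually_all_infinitely_moved_precede_general π0 M A n hn hA
end

section
/- Correctness of the IAR priority scheme in the stabilized regime, abstract version: let ρ : ℕ → Fin k → Prop ('F-visit') and σ : ℕ → Fin k → Prop ('I-visit') describe which prohibited and required sets each step visits, and let π_t be the move-to-front record driven by M_t = {i | ρ t i}. Define priority of step t as 2·m if the maximal position m among visited pairs at step t is achieved only by an I-visit (not an F-visit at that position), 2·m+1 if it is achieved by an F-visit, and 1 if no pair is visited. If there exists n with {t | σ t n} infinite and {t | ρ t n} finite, then the limsup of the priority sequence is even and positive. -/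
/-- The move-to-front record driven by the `F`-visits `ρ`:
at step `t` the indices `i` with `ρ t i` are moved to the front. -/
noncomputable def mtfRecord {k : ℕ} (π0 : Equiv.Perm (Fin k))
    (ρ : ℕ → Fin k → Prop) : ℕ → Equiv.Perm (Fin k) :=
  mtfSeq π0 (fun t => (Set.toFinite {i : Fin k | ρ t i}).toFinset)

/-- The maximal (1-based) position among the pairs visited at step `t`
(either an `F`-visit `ρ` or an `I`-visit `σ`), or `0` if no pair is visited. -/
noncomputable def maxPos {k : ℕ} (π0 : Equiv.Perm (Fin k))
    (ρ σ : ℕ → Fin k → Prop) (t : ℕ) : ℕ :=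
  ((Set.toFinite {i : Fin k | ρ t i ∨ σ t i}).toFinset).sup
    (fun i => (((mtfRecord π0 ρ t).symm i : Fin k) : ℕ) + 1)

open Classical in
/-- The IAR priority emitted at step `t`: `1` if no pair is visited,
`2 * m + 1` if the pair at the maximal visited position `m` is `F`-visited,
and `2 * m` otherwise. -/
noncomputable def iarPrio {k : ℕ} (π0 : Equiv.Perm (Fin k))
    (ρ σ : ℕ → Fin k → Prop) (t : ℕ) : ℕ :=
  if maxPos π0 ρ σ t = 0 then 1
  else if ∃ i, ρ t i ∧ (((mtfRecord π0 ρ t).symm i : Fin k) : ℕ) + 1 = maxPos π0 ρ σ t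
    then 2 * maxPos π0 ρ σ t + 1
    else 2 * maxPos π0 ρ σ t

/-!
Once the finitely many `F`-visits of `n` are over, `n` is never moved to the front, so its
position in the move-to-front record can only grow; being bounded by `k`, it stabilises at some
`q`. From then on every `F`-visited index lies strictly in front of `n`: otherwise moving it to
the front would push `n` back. Hence every odd priority emitted afterwards is at most `2q + 1`,
while each of the infinitely many `I`-visits of `n` emits a priority of at least `2q + 2`. So the
largest priority occurring infinitely often is at least `2q + 2` and cannot be odd.
-/
theorem List.idxOf_filter_append_filter_not {α : Type*} [DecidableEq α] {p : α → Bool}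
    {l : List α} {x : α} (hx : x ∈ l) (hp : p x = false) :
    (l.filter p ++ l.filter (fun y => !p y)).idxOf x =
      l.idxOf x + (l.drop (l.idxOf x)).countP p := by
  induction l with
  | nil => simp at hx
  | cons a l ih =>
    by_cases hax : a = x
    · subst hax
      simp [hp, List.idxOf_append_of_notMem, List.countP_eq_length_filter]
    · have := ih (by simpa [Ne.symm hax] using hx)
      cases hpa : p a <;>
        simp_all [List.idxOf_append_of_notMem, List.idxOf_cons_ne] <;> omega

theorem Equiv.Perm.idxOf_ofFn {k : ℕ} (e : Equiv.Perm (Fin k)) (x : Fin k) :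
    (List.ofFn e).idxOf x = e.symm x := by
  simpa using (List.nodup_ofFn.mpr e.injective).idxOf_getElem (e.symm x) (by simp)

section MoveToFront

variable {k : ℕ} (π : Equiv.Perm (Fin k)) (M : Finset (Fin k))

theorem ofFn_moveToFront :
    List.ofFn (moveToFront π M) =
      (List.ofFn π).filter (fun y => decide (y ∈ M)) ++
        (List.ofFn π).filter (fun y => !decide (y ∈ M)) := by
  apply List.ext_getElem
  · rw [List.length_ofFn, (List.filter_append_perm _ _).length_eq, List.length_ofFn]
  · intro j h₁ h₂
    simp [moveToFront, List.ofFn_eq_map]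

variable {π M}

theorem moveToFront_symm_apply_val_of_notMem {n : Fin k} (hn : n ∉ M) :
    ((moveToFront π M).symm n : ℕ) =
      π.symm n + ((List.ofFn π).drop (π.symm n)).countP (fun y => decide (y ∈ M)) := by
  rw [← Equiv.Perm.idxOf_ofFn, ofFn_moveToFront,
    List.idxOf_filter_append_filter_not
    (List.mem_ofFn.mpr ⟨_, π.apply_symm_apply n⟩) (by simpa using hn), Equiv.Perm.idxOf_ofFn]

theorem symm_apply_le_moveToFront_symm_apply {n : Fin k} (hn : n ∉ M) :
    π.symm n ≤ (moveToFront π M).symm n := by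
  rw [Fin.le_def, moveToFront_symm_apply_val_of_notMem hn]
  exact Nat.le_add_right _ _

theorem symm_apply_lt_moveToFront_symm_apply {n i : Fin k} (hn : n ∉ M) (hi : i ∈ M)
    (hni : π.symm n ≤ π.symm i) : π.symm n < (moveToFront π M).symm n := by
  rw [Fin.lt_def, moveToFront_symm_apply_val_of_notMem hn, Nat.lt_add_right_iff_pos,
    List.countP_pos_iff]
  refine ⟨i, List.mem_drop_iff_getElem.mpr ⟨π.symm i - π.symm n, by simp; omega, ?_⟩, by simpa⟩
  rw [List.getElem_ofFn]
  convert π.apply_symm_apply i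
  exact Nat.add_sub_of_le hni

end MoveToFront

theorem sSup_infinite_fibers_mem_and_le {f : ℕ → ℕ} {B c : ℕ} (hB : ∀ t, f t ≤ B)
    (hc : {t | c ≤ f t}.Infinite) :
    sSup {p | {t | f t = p}.Infinite} ∈ {p | {t | f t = p}.Infinite} ∧
      c ≤ sSup {p | {t | f t = p}.Infinite} := by
  have hbdd : BddAbove {p | {t | f t = p}.Infinite} :=
    ⟨B, fun p hp => by obtain ⟨t, rfl⟩ := hp.nonempty; exact hB t⟩
  obtain ⟨p, hcp, hp⟩ : ∃ p, c ≤ p ∧ {t | f t = p}.Infinite := by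
    by_contra! h
    refine hc (((Set.finite_Icc c B).biUnion fun p hp => h p hp.1).subset fun t ht => ?_)
    exact Set.mem_biUnion ⟨ht, hB t⟩ rfl
  exact ⟨Nat.sSup_mem ⟨p, hp⟩ hbdd, hcp.trans (le_csSup hbdd hp)⟩

section Record

variable {k : ℕ} (π0 : Equiv.Perm (Fin k)) (ρ σ : ℕ → Fin k → Prop)

theorem exists_stable_mtfRecord_symm {n : Fin k} (hn : {t | ρ t n}.Finite) :
    ∃ T q, ∀ t ≥ T, (mtfRecord π0 ρ t).symm n = q ∧
      ∀ i, ρ t i → (mtfRecord π0 ρ t).symm i < q := by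
  obtain ⟨T₀, hT₀⟩ := hn.bddAbove
  have hnot (t : ℕ) (ht : T₀ < t) : n ∉ (Set.toFinite {i | ρ t i}).toFinset := by
    simpa using fun h => (hT₀ h).not_gt ht
  have hmono : Monotone fun b => (mtfRecord π0 ρ (T₀ + 1 + b)).symm n :=
    monotone_nat_of_le_succ fun b => symm_apply_le_moveToFront_symm_apply
      (hnot _ (Nat.lt_of_succ_le (Nat.le_add_right _ b)))
  obtain ⟨a, ha⟩ := WellFoundedGT.monotone_chain_condition ⟨_, hmono⟩
  have hstable (t : ℕ) (ht : T₀ + 1 + a ≤ t) :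
      (mtfRecord π0 ρ t).symm n = (mtfRecord π0 ρ (T₀ + 1 + a)).symm n := by
    obtain ⟨b, rfl⟩ := Nat.exists_eq_add_of_le ht
    simpa [add_assoc] using (ha (a + b) (by omega)).symm
  refine ⟨T₀ + 1 + a, _, fun t ht => ⟨hstable t ht, fun i hi => ?_⟩⟩
  rw [← hstable t ht]
  by_contra! hle
  have := symm_apply_lt_moveToFront_symm_apply (hnot t (by omega)) (by simpa using hi) hle
  change _ < (mtfRecord π0 ρ (t + 1)).symm n at this
  rw [hstable (t + 1) (by omega), hstable t ht] at this
  exact this.false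

theorem le_maxPos {t : ℕ} {i : Fin k} (hi : ρ t i ∨ σ t i) :
    ((mtfRecord π0 ρ t).symm i : ℕ) + 1 ≤ maxPos π0 ρ σ t :=
  Finset.le_sup (f := fun i => ((mtfRecord π0 ρ t).symm i : ℕ) + 1) (by simpa using hi)

theorem maxPos_le (t : ℕ) : maxPos π0 ρ σ t ≤ k :=
  Finset.sup_le fun _ _ => Fin.is_lt _

theorem iarPrio_le (t : ℕ) : iarPrio π0 ρ σ t ≤ 2 * k + 1 := by
  have := maxPos_le π0 ρ σ t
  unfold iarPrio
  split_ifs <;> omega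

theorem le_iarPrio {t : ℕ} {i : Fin k} (hi : σ t i) :
    2 * (((mtfRecord π0 ρ t).symm i : ℕ) + 1) ≤ iarPrio π0 ρ σ t := by
  have := le_maxPos π0 ρ σ (Or.inr hi)
  unfold iarPrio
  split_ifs <;> omega

variable {π0 ρ σ}

theorem iarPrio_eq_of_odd {t : ℕ} (h : Odd (iarPrio π0 ρ σ t)) :
    iarPrio π0 ρ σ t = 1 ∨
      ∃ i, ρ t i ∧ iarPrio π0 ρ σ t = 2 * (((mtfRecord π0 ρ t).symm i : ℕ) + 1) + 1 := by
  unfold iarPrio at h ⊢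
  split_ifs at h ⊢ with _ hρ
  · exact .inl rfl
  · obtain ⟨i, hi, hpos⟩ := hρ
    exact .inr ⟨i, hi, by rw [hpos]⟩
  · exact absurd h (by simp)

end Record

theorem iar_priority_accepting_general {k : ℕ}
    (π0 : Equiv.Perm (Fin k)) (ρ σ : ℕ → Fin k → Prop)
    (h : ∃ n : Fin k, Set.Infinite {t : ℕ | σ t n} ∧ Set.Finite {t : ℕ | ρ t n}) :
    Even (sSup {p : ℕ | Set.Infinite {t : ℕ | iarPrio π0 ρ σ t = p}}) ∧
      0 < sSup {p : ℕ | Set.Infinite {t : ℕ | iarPrio π0 ρ σ t = p}} := by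
  obtain ⟨n, hσ, hρ⟩ := h
  obtain ⟨T, q, hT⟩ := exists_stable_mtfRecord_symm π0 ρ hρ
  have hlarge : {t | 2 * ((q : ℕ) + 1) ≤ iarPrio π0 ρ σ t}.Infinite := by
    refine (hσ.sdiff (Set.finite_Iio T)).mono fun t ht => ?_
    have := le_iarPrio π0 ρ σ ht.1
    rwa [(hT t (not_lt.mp ht.2)).1] at this
  obtain ⟨hmem, hle⟩ := sSup_infinite_fibers_mem_and_le (iarPrio_le π0 ρ σ) hlarge
  refine ⟨?_, by omega⟩
  obtain ⟨t, ht : iarPrio π0 ρ σ t = _, hTt⟩ := hmem.exists_gt T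
  by_contra hodd
  rw [Nat.not_even_iff_odd, ← ht] at hodd
  rcases iarPrio_eq_of_odd hodd with h1 | ⟨i, hi, h2⟩
  · omega
  · have := Fin.lt_def.mp ((hT t hTt.le).2 i hi)
    omega

/-- Correctness of the IAR priority scheme (abstract version), accepting
direction: if some pair `n` has infinitely many `I`-visits but only finitely
many `F`-visits, then the maximal priority occurring infinitely often in the
priority sequence is even and positive. -/
theorem iar_priority_accepting {k : ℕ} (hk : 0 < k)
    (π0 : Equiv.Perm (Fin k)) (ρ σ : ℕ → Fin k → Prop)
    (h : ∃ n : Fin k, Set.Infinite {t : ℕ | σ t n} ∧ Set.Finite {t : ℕ | ρ t n}) :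
    Even (sSup {p : ℕ | Set.Infinite {t : ℕ | iarPrio π0 ρ σ t = p}}) ∧
      0 < sSup {p : ℕ | Set.Infinite {t : ℕ | iarPrio π0 ρ σ t = p}} :=
  iar_priority_accepting_general π0 ρ σ h
end
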